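/- arXiv:1706.08688 — 2 statements merged into one kernel-verified Lean document; each statement's English description precedes it below -/
import Mathlib

section
/- Let h : R^n -> R be a convex function with \int e^{h(x) - (\beta/2)|x|^2} d\gamma_n(x) = 1 for some \beta \ge 0. Then its Legendre transform h^*(t) := \sup_x (\langle t,x \rangle - h(x)) satisfies h^*(t) \ge -(n/2)\ln(1+\beta) + |t|^2/(2(1+\beta)) for all t in R^n. -/
open MeasureTheory Real Set

noncomputable def stdGaussian (n : ℕ) : Measure (EuclideanSpace ℝ (Fin n)) :=
  volume.withDensity (fun x => ENNReal.ofReal ((2 * π) ^ (-(n : ℝ) / 2) * Real.exp (-‖x‖ ^ 2 / 2)))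

noncomputable def Phibar (s : ℝ) : ℝ :=
  (Real.sqrt (2 * π))⁻¹ * ∫ x in Set.Ioi s, Real.exp (-x ^ 2 / 2)

/-! Every real upper bound `s` of `x ↦ ⟪t, x⟫ - h x` gives `h x ≥ ⟪t, x⟫ - s`, so the
normalisation yields `1 ≥ e^{-s} ∫ e^{⟪t, x⟫ - β|x|²/2} dγₙ`, and completing the square evaluates
this Gaussian integral as `(1 + β)^{-n/2} e^{|t|²/(2(1 + β))}`. -/

theorem EReal.coe_le_iSup_coe_iff {ι : Type*} (f : ι → ℝ) (c : ℝ) :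
    (c : EReal) ≤ ⨆ i, (f i : EReal) ↔ ∀ s : ℝ, (∀ i, f i ≤ s) → c ≤ s := by
  refine ⟨fun hc s hs =>
    EReal.coe_le_coe_iff.1 (hc.trans (iSup_le fun i => by exact_mod_cast hs i)),
    fun H => le_iSup_iff.2 fun b hb => ?_⟩
  induction b using EReal.rec with
  | bot => exact absurd (H (c - 1) fun i => by simpa using hb i) (by linarith)
  | coe s => exact_mod_cast H s fun i => by exact_mod_cast hb i
  | top => exact le_top

section GaussianIntegral

variable {V : Type*} [NormedAddCommGroup V] [InnerProductSpace ℝ V] [FiniteDimensional ℝ V]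
  [MeasurableSpace V] [BorelSpace V]

theorem integral_rexp_neg_mul_sq_norm_add_inner {b : ℝ} (hb : 0 < b) (w : V) :
    ∫ v : V, rexp (-b * ‖v‖ ^ 2 + inner ℝ w v) =
      (π / b) ^ (Module.finrank ℝ V / 2 : ℝ) * rexp (‖w‖ ^ 2 / (4 * b)) := by
  have hsq : ∀ v : V, -b * ‖v‖ ^ 2 + inner ℝ w v
      = -b * ‖v - (2 * b)⁻¹ • w‖ ^ 2 + ‖w‖ ^ 2 / (4 * b) := fun v => by
    rw [norm_sub_sq_real, real_inner_smul_right, norm_smul, mul_pow, Real.norm_eq_abs, sq_abs,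
      real_inner_comm]
    field_simp
    ring
  simp_rw [hsq, Real.exp_add, integral_mul_const]
  rw [integral_sub_right_eq_self (fun v : V => rexp (-b * ‖v‖ ^ 2)),
    GaussianFourier.integral_rexp_neg_mul_sq_norm hb]

end GaussianIntegral

theorem integral_stdGaussian (n : ℕ) (f : EuclideanSpace ℝ (Fin n) → ℝ) :
    ∫ x, f x ∂stdGaussian n = ∫ x, (2 * π) ^ (-(n : ℝ) / 2) * rexp (-‖x‖ ^ 2 / 2) * f x := by
  rw [stdGaussian, integral_withDensity_eq_integral_toReal_smul (by fun_prop)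
    (ae_of_all _ fun _ => ENNReal.ofReal_lt_top)]
  congr 1 with x
  rw [ENNReal.toReal_ofReal (by positivity), smul_eq_mul]

theorem integral_exp_inner_sub_mul_sq_norm_stdGaussian (n : ℕ) {β : ℝ} (hβ : 0 < 1 + β)
    (t : EuclideanSpace ℝ (Fin n)) :
    ∫ x, rexp (inner ℝ t x - β / 2 * ‖x‖ ^ 2) ∂stdGaussian n
      = rexp (-(n : ℝ) / 2 * log (1 + β) + ‖t‖ ^ 2 / (2 * (1 + β))) := by
  have hexp : ∀ x : EuclideanSpace ℝ (Fin n),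
      (2 * π) ^ (-(n : ℝ) / 2) * rexp (-‖x‖ ^ 2 / 2) * rexp (inner ℝ t x - β / 2 * ‖x‖ ^ 2)
        = (2 * π) ^ (-(n : ℝ) / 2) * rexp (-((1 + β) / 2) * ‖x‖ ^ 2 + inner ℝ t x) := fun x => by
    rw [mul_assoc, ← Real.exp_add]
    ring_nf
  rw [integral_stdGaussian]
  simp_rw [hexp]
  rw [integral_const_mul, integral_rexp_neg_mul_sq_norm_add_inner (by positivity),
    finrank_euclideanSpace_fin, Real.exp_add, mul_comm (-(n : ℝ) / 2), ← Real.rpow_def_of_pos hβ,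
    ← mul_assoc]
  congr 1
  · rw [show π / ((1 + β) / 2) = 2 * π / (1 + β) by field_simp, Real.div_rpow (by positivity) hβ.le,
      neg_div, Real.rpow_neg (by positivity), Real.rpow_neg hβ.le]
    field_simp
  · congr 1
    ring

theorem le_of_forall_inner_sub_le_of_integral_exp_eq_one {n : ℕ} {h : EuclideanSpace ℝ (Fin n) → ℝ}
    {β : ℝ} (hβ : 0 < 1 + β)
    (hint : ∫ x, rexp (h x - β / 2 * ‖x‖ ^ 2) ∂stdGaussian n = 1)
    {t : EuclideanSpace ℝ (Fin n)} {s : ℝ} (hs : ∀ x, inner ℝ t x - h x ≤ s) :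
    -(n : ℝ) / 2 * log (1 + β) + ‖t‖ ^ 2 / (2 * (1 + β)) ≤ s := by
  have hintegrable : Integrable (fun x => rexp (h x - β / 2 * ‖x‖ ^ 2)) (stdGaussian n) :=
    Integrable.of_integral_ne_zero (by rw [hint]; exact one_ne_zero)
  rw [← sub_nonpos, ← Real.exp_le_one_iff]
  calc rexp (-(n : ℝ) / 2 * log (1 + β) + ‖t‖ ^ 2 / (2 * (1 + β)) - s)
      = ∫ x, rexp (inner ℝ t x - s - β / 2 * ‖x‖ ^ 2) ∂stdGaussian n := by
        rw [Real.exp_sub, ← integral_exp_inner_sub_mul_sq_norm_stdGaussian n hβ t,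
          ← integral_div]
        congr 1 with x
        rw [← Real.exp_sub]
        ring_nf
    _ ≤ ∫ x, rexp (h x - β / 2 * ‖x‖ ^ 2) ∂stdGaussian n :=
        integral_mono_of_nonneg (ae_of_all _ fun _ => (Real.exp_pos _).le) hintegrable
          (ae_of_all _ fun x => Real.exp_le_exp.2 (by linarith [hs x]))
    _ = 1 := hint

theorem legendre_lower_bound_general (n : ℕ) (h : EuclideanSpace ℝ (Fin n) → ℝ) (β : ℝ)
    (hβ : 0 ≤ β)
    (hint : ∫ x, Real.exp (h x - β / 2 * ‖x‖ ^ 2) ∂(stdGaussian n) = 1) :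
    ∀ t : EuclideanSpace ℝ (Fin n),
      ((↑((-(n : ℝ) / 2) * Real.log (1 + β) + ‖t‖ ^ 2 / (2 * (1 + β))) : ℝ) : EReal)
        ≤ ⨆ x : EuclideanSpace ℝ (Fin n), ((inner ℝ t x - h x : ℝ) : EReal) := fun t =>
  (EReal.coe_le_iSup_coe_iff _ _).2 fun _ hs =>
    le_of_forall_inner_sub_le_of_integral_exp_eq_one (by linarith) hint hs

theorem legendre_lower_bound (n : ℕ) (h : EuclideanSpace ℝ (Fin n) → ℝ) (β : ℝ)
    (hβ : 0 ≤ β)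
    (hconv : ConvexOn ℝ Set.univ h)
    (hint : ∫ x, Real.exp (h x - β / 2 * ‖x‖ ^ 2) ∂(stdGaussian n) = 1) :
    ∀ t : EuclideanSpace ℝ (Fin n),
      ((↑((-(n : ℝ) / 2) * Real.log (1 + β) + ‖t‖ ^ 2 / (2 * (1 + β))) : ℝ) : EReal)
        ≤ ⨆ x : EuclideanSpace ℝ (Fin n), ((inner ℝ t x - h x : ℝ) : EReal) :=
  legendre_lower_bound_general n h β hβ hint
end

section
/- Let f : R -> R be convex with \int e^f d\gamma_1 = 1. Then for all t \ge 1, \gamma_1(\{x : f(x) \ge t\}) \le \sqrt{2/\pi} \cdot e^{-t}/\sqrt{t}. -/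
open MeasureTheory Real Set

/-!
A convex `f` lies above a supporting line `y ↦ f x + c (y - x)` at every point `x`, and the
Gaussian integral of the exponential of an affine function is explicit (the Gaussian moment
generating function): `∫ exp (c y + a) dγ = exp (a + c² / 2)`. So `∫ exp f dγ ≤ 1` forces
`f x - c x + c² / 2 ≤ 0`, whence `f x ≤ c x - c² / 2 ≤ x² / 2`. Thus `{f ≥ t} ⊆ {|x| ≥ √(2t)}`,
and the Mills-ratio bound `γ [s, ∞) ≤ φ(s) / s`, applied to both tails, gives the estimate.
-/

open ProbabilityTheory Filter Topology
open scoped NNReal ENNReal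

namespace ConvexOn

lemma exists_supporting_line {f : ℝ → ℝ} (hf : ConvexOn ℝ univ f) (x : ℝ) :
    ∃ c, ∀ y, f x + c * (y - x) ≤ f y := by
  have hx : x ∈ interior univ := by simp
  refine ⟨derivWithin f (Ioi x) x, fun y => ?_⟩
  rcases lt_trichotomy y x with hyx | rfl | hxy
  · have h := (hf.slope_le_leftDeriv_of_mem_interior (mem_univ y) hx hyx).trans
      (hf.leftDeriv_le_rightDeriv_of_mem_interior hx)
    rw [slope_def_field, div_le_iff₀ (sub_pos.2 hyx)] at h
    nlinarith
  · simp
  · have h := hf.rightDeriv_le_slope_of_mem_interior hx (mem_univ y) hxy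
    rw [slope_def_field, le_div_iff₀ (sub_pos.2 hxy)] at h
    linarith

end ConvexOn

lemma integral_exp_mul_add_gaussianReal (μ : ℝ) (v : ℝ≥0) (c a : ℝ) :
    ∫ x, exp (c * x + a) ∂gaussianReal μ v = exp (μ * c + v * c ^ 2 / 2 + a) := by
  simp_rw [exp_add _ a, integral_mul_const]
  exact congrArg (· * exp a) (congrFun mgf_id_gaussianReal c)

lemma integrable_exp_mul_add_gaussianReal (μ : ℝ) (v : ℝ≥0) (c a : ℝ) :
    Integrable (fun x => exp (c * x + a)) (gaussianReal μ v) := by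
  simp_rw [exp_add]
  exact (integrable_exp_mul_gaussianReal c).mul_const _

lemma ConvexOn.le_sq_div_of_integral_exp_le_one {f : ℝ → ℝ} (hf : ConvexOn ℝ univ f)
    {μ : ℝ} {v : ℝ≥0} (hv : v ≠ 0) (hint : Integrable (fun x => exp (f x)) (gaussianReal μ v))
    (hle : ∫ x, exp (f x) ∂gaussianReal μ v ≤ 1) (x : ℝ) :
    f x ≤ (x - μ) ^ 2 / (2 * v) := by
  obtain ⟨c, hc⟩ := hf.exists_supporting_line x
  have hexp : exp (μ * c + v * c ^ 2 / 2 + (f x - c * x)) ≤ 1 := by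
    rw [← integral_exp_mul_add_gaussianReal]
    refine (integral_mono (integrable_exp_mul_add_gaussianReal μ v c _) hint
      fun y => exp_le_exp.2 ?_).trans hle
    linarith [hc y]
  have hv_pos : (0 : ℝ) < v := by positivity
  rw [exp_le_one_iff] at hexp
  rw [le_div_iff₀ (by positivity)]
  nlinarith [sq_nonneg (x - μ - v * c)]

lemma integrable_exp_neg_sq_div_two : Integrable fun x : ℝ => exp (-x ^ 2 / 2) := by
  simpa [neg_div, div_eq_inv_mul] using integrable_exp_neg_mul_sq (b := 1 / 2) (by norm_num)

lemma integrable_mul_exp_neg_sq_div_two : Integrable fun x : ℝ => x * exp (-x ^ 2 / 2) := by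
  simpa [neg_div, div_eq_inv_mul] using integrable_mul_exp_neg_mul_sq (b := 1 / 2) (by norm_num)

lemma integral_Ioi_mul_exp_neg_sq_div_two (s : ℝ) :
    ∫ x in Ioi s, x * exp (-x ^ 2 / 2) = exp (-s ^ 2 / 2) := by
  have hderiv (x : ℝ) : HasDerivAt (fun x => -exp (-x ^ 2 / 2)) (x * exp (-x ^ 2 / 2)) x := by
    have h : HasDerivAt (fun x : ℝ => -x ^ 2 / 2) (-x) x :=
      ((hasDerivAt_pow 2 x).fun_neg.div_const 2).congr_deriv (by ring)
    exact h.exp.fun_neg.congr_deriv (by ring)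
  have hlim : Tendsto (fun x : ℝ => -exp (-x ^ 2 / 2)) atTop (𝓝 0) := by
    have : Tendsto (fun x : ℝ => -x ^ 2 / 2) atTop atBot :=
      (tendsto_neg_atTop_atBot.comp (tendsto_pow_atTop two_ne_zero)).atBot_div_const
        two_pos
    simpa using (tendsto_exp_atBot.comp this).neg
  rw [integral_Ioi_of_hasDerivAt_of_tendsto (hderiv s).continuousAt.continuousWithinAt
    (fun x _ => hderiv x) integrable_mul_exp_neg_sq_div_two.integrableOn hlim]
  ring

lemma integral_Ioi_exp_neg_sq_div_two_le {s : ℝ} (hs : 0 < s) :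
    ∫ x in Ioi s, exp (-x ^ 2 / 2) ≤ exp (-s ^ 2 / 2) / s := by
  calc ∫ x in Ioi s, exp (-x ^ 2 / 2)
      ≤ ∫ x in Ioi s, x * exp (-x ^ 2 / 2) / s := by
        refine setIntegral_mono_on integrable_exp_neg_sq_div_two.integrableOn
          (integrable_mul_exp_neg_sq_div_two.div_const s).integrableOn measurableSet_Ioi
          fun x hx => ?_
        rw [le_div_iff₀ hs, mul_comm]
        exact mul_le_mul_of_nonneg_right (le_of_lt hx) (exp_pos _).le
    _ = exp (-s ^ 2 / 2) / s := by
        rw [integral_div, integral_Ioi_mul_exp_neg_sq_div_two]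

lemma gaussianPDFReal_zero_one (x : ℝ) :
    gaussianPDFReal 0 1 x = (√(2 * π))⁻¹ * exp (-x ^ 2 / 2) := by
  simp [gaussianPDFReal]

lemma gaussianReal_Ici_le_gaussianPDFReal_div {s : ℝ} (hs : 0 < s) :
    gaussianReal 0 1 (Ici s) ≤ ENNReal.ofReal (gaussianPDFReal 0 1 s / s) := by
  rw [gaussianReal_apply_eq_integral 0 one_ne_zero, integral_Ici_eq_integral_Ioi]
  refine ENNReal.ofReal_le_ofReal ?_
  simp_rw [gaussianPDFReal_zero_one, integral_const_mul, mul_div_assoc]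
  gcongr
  exact integral_Ioi_exp_neg_sq_div_two_le hs

lemma gaussianReal_Iic_neg (v : ℝ≥0) (s : ℝ) :
    gaussianReal 0 v (Iic (-s)) = gaussianReal 0 v (Ici s) := by
  conv_lhs => rw [← neg_zero, ← gaussianReal_map_neg]
  rw [Measure.map_apply measurable_neg measurableSet_Iic]
  congr 1
  ext x
  simp

lemma gaussianReal_setOf_le_abs_le {s : ℝ} (hs : 0 < s) :
    gaussianReal 0 1 {x | s ≤ |x|} ≤ ENNReal.ofReal (2 * gaussianPDFReal 0 1 s / s) := by
  have hset : {x : ℝ | s ≤ |x|} = Iic (-s) ∪ Ici s := by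
    ext x
    simp [le_abs', or_comm]
  calc gaussianReal 0 1 {x | s ≤ |x|}
      ≤ gaussianReal 0 1 (Iic (-s)) + gaussianReal 0 1 (Ici s) := hset ▸ measure_union_le _ _
    _ ≤ ENNReal.ofReal (gaussianPDFReal 0 1 s / s)
          + ENNReal.ofReal (gaussianPDFReal 0 1 s / s) := by
        rw [gaussianReal_Iic_neg]
        gcongr <;> exact gaussianReal_Ici_le_gaussianPDFReal_div hs
    _ = ENNReal.ofReal (2 * gaussianPDFReal 0 1 s / s) := by
        have h := div_nonneg (gaussianPDFReal_nonneg 0 1 s) hs.le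
        rw [← ENNReal.ofReal_add h h]
        ring_nf

theorem deviation_dim1_convex (f : ℝ → ℝ)
    (hconv : ConvexOn ℝ Set.univ f)
    (hint : ∫ x, Real.exp (f x) ∂(ProbabilityTheory.gaussianReal 0 1) = 1) :
    ∀ t : ℝ, 1 ≤ t →
      ProbabilityTheory.gaussianReal 0 1 {x | t ≤ f x}
        ≤ ENNReal.ofReal (Real.sqrt (2 / π) * (Real.exp (-t) / Real.sqrt t)) := by
  intro t ht
  have hexp : Integrable (fun x => exp (f x)) (gaussianReal 0 1) :=
    Integrable.of_integral_ne_zero (by simp [hint])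
  have hsub : {x | t ≤ f x} ⊆ {x | √(2 * t) ≤ |x|} := fun x (hx : t ≤ f x) => by
    have hfx := hconv.le_sq_div_of_integral_exp_le_one one_ne_zero hexp hint.le x
    rw [NNReal.coe_one, sub_zero] at hfx
    show √(2 * t) ≤ |x|
    rw [← sqrt_sq_eq_abs]
    exact sqrt_le_sqrt (by linarith)
  have hpdf :
      2 * gaussianPDFReal 0 1 √(2 * t) / √(2 * t) = √(2 / π) * (exp (-t) / √(2 * t)) := by
    rw [gaussianPDFReal_zero_one, sq_sqrt (by linarith), sqrt_div zero_le_two,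
      sqrt_mul zero_le_two]
    field_simp
    exact (sq_sqrt zero_le_two).symm
  calc gaussianReal 0 1 {x | t ≤ f x}
      ≤ gaussianReal 0 1 {x | √(2 * t) ≤ |x|} := measure_mono hsub
    _ ≤ ENNReal.ofReal (2 * gaussianPDFReal 0 1 √(2 * t) / √(2 * t)) :=
        gaussianReal_setOf_le_abs_le (by positivity)
    _ ≤ ENNReal.ofReal (√(2 / π) * (exp (-t) / √t)) := by
        rw [hpdf]
        gcongr
        linarith
end
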